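/- For a reversible irreducible Markov kernel K on a finite state space with strictly positive stationary density f, the convergence bound 2·‖Kⁿ(x,·) − f‖_TV ≤ f(x)^{−1/2}·βⁿ holds, where β = max{|β_min|, β₁} and β_min ≤ ... ≤ β₁ < β₀ = 1 are the eigenvalues of K viewed as a self-adjoint operator on L²(f), and ‖μ − ν‖_TV = (1/2)∑_y |μ(y) − ν(y)|. -/

import Mathlib

/-!
Conjugating by `D = diag √f` turns `K` into `M = D K D⁻¹` (`symmetrize K f`), which detailed
balance makes symmetric, and `M √f = √f`. Let `Π` (`stationaryProjection f`) be the orthogonal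
projection onto the unit vector `√f`. Every eigenvector of `M - Π` with a nonzero eigenvalue is
orthogonal to `√f` and comes from an eigenfunction of `K` that is not constant, so `M - Π` is a
symmetric matrix whose eigenvalues have modulus at most `β`. Since `Mⁿ - Π = (M - Π)ⁿ (1 - Π)`,
the `x`-th row of `Mⁿ - Π` has Euclidean norm at most `βⁿ`. That row is
`y ↦ √(f x) (Kⁿ(x, y) - f y) / √(f y)`, so Cauchy–Schwarz against `√f` bounds
`∑ y, |Kⁿ(x, y) - f y|` by `βⁿ / √(f x)`.
-/

open Module.End in
theorem LinearMap.IsSymmetric.norm_apply_sq_le {𝕜 E : Type*} [RCLike 𝕜] [NormedAddCommGroup E]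
    [InnerProductSpace 𝕜 E] [FiniteDimensional 𝕜 E] {T : E →ₗ[𝕜] E} (hT : T.IsSymmetric)
    {β : ℝ} (hβ : ∀ μ : 𝕜, HasEigenvalue T μ → ‖μ‖ ≤ β) (v : E) :
    ‖T v‖ ^ 2 ≤ β ^ 2 * ‖v‖ ^ 2 := by
  set b := hT.eigenvectorBasis rfl
  set ev := hT.eigenvalues rfl
  have hev : ∀ i, |ev i| ≤ β := fun i => by
    simpa using hβ _ (hT.hasEigenvalue_eigenvalues rfl i)
  calc ‖T v‖ ^ 2 = ∑ i, ‖inner 𝕜 (b i) (T v)‖ ^ 2 := (b.sum_sq_norm_inner_right _).symm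
    _ = ∑ i, ev i ^ 2 * ‖inner 𝕜 (b i) v‖ ^ 2 := by
      refine Finset.sum_congr rfl fun i _ => ?_
      rw [← hT, hT.apply_eigenvectorBasis, inner_smul_left, norm_mul, RCLike.norm_conj,
        RCLike.norm_ofReal, mul_pow, sq_abs]
    _ ≤ ∑ i, β ^ 2 * ‖inner 𝕜 (b i) v‖ ^ 2 := by
      gcongr ∑ i, ?_ * _ with i
      exact sq_le_sq.mpr ((hev i).trans (le_abs_self β))
    _ = β ^ 2 * ‖v‖ ^ 2 := by rw [← Finset.mul_sum, b.sum_sq_norm_inner_right]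

namespace Matrix

variable {n : Type*} [Fintype n]

theorem abs_le_one_of_isIdempotentElem {Q : Matrix n n ℝ} (hQ : IsIdempotentElem Q) {μ : ℝ}
    {g : n → ℝ} (hg : g ≠ 0) (h : Q *ᵥ g = μ • g) : |μ| ≤ 1 := by
  have : (μ * μ) • g = μ • g := by
    rw [mul_smul, ← h, ← mulVec_smul, ← h, mulVec_mulVec, hQ.eq]
  have hμ : μ * μ = μ := smul_left_injective ℝ hg this
  rcases mul_right_eq_self₀.mp hμ with rfl | rfl <;> norm_num

variable [DecidableEq n] {A : Matrix n n ℝ}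

theorem IsHermitian.mulVec_dotProduct_self_le (hA : A.IsHermitian) {β : ℝ}
    (hβ : ∀ (μ : ℝ) (g : n → ℝ), g ≠ 0 → A *ᵥ g = μ • g → |μ| ≤ β) (v : n → ℝ) :
    A *ᵥ v ⬝ᵥ A *ᵥ v ≤ β ^ 2 * (v ⬝ᵥ v) := by
  have hT := isSymmetric_toEuclideanLin_iff.mpr hA
  have key := hT.norm_apply_sq_le (β := β) ?_ (WithLp.toLp 2 v)
  · rw [EuclideanSpace.real_norm_sq_eq, EuclideanSpace.real_norm_sq_eq] at key
    simpa [dotProduct, sq] using key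
  intro μ hμ
  obtain ⟨w, hw, hw0⟩ := hμ.exists_hasEigenvector
  refine Real.norm_eq_abs μ ▸ hβ μ w.ofLp ?_ ?_
  · simpa using hw0
  · simpa using congrArg WithLp.ofLp (Module.End.mem_eigenspace_iff.mp hw)

theorem IsHermitian.pow_mulVec_dotProduct_self_le (hA : A.IsHermitian) {β : ℝ}
    (hβ : ∀ (μ : ℝ) (g : n → ℝ), g ≠ 0 → A *ᵥ g = μ • g → |μ| ≤ β) (k : ℕ) (v : n → ℝ) :
    A ^ k *ᵥ v ⬝ᵥ A ^ k *ᵥ v ≤ (β ^ k) ^ 2 * (v ⬝ᵥ v) := by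
  induction k with
  | zero => simp
  | succ k ih =>
    calc A ^ (k + 1) *ᵥ v ⬝ᵥ A ^ (k + 1) *ᵥ v
        = A *ᵥ (A ^ k *ᵥ v) ⬝ᵥ A *ᵥ (A ^ k *ᵥ v) := by rw [pow_succ', mulVec_mulVec]
      _ ≤ β ^ 2 * ((β ^ k) ^ 2 * (v ⬝ᵥ v)) :=
        (hA.mulVec_dotProduct_self_le hβ _).trans (by gcongr)
      _ = (β ^ (k + 1)) ^ 2 * (v ⬝ᵥ v) := by ring

theorem IsHermitian.sum_sq_apply (hA : A.IsHermitian) (x : n) :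
    ∑ y, A x y ^ 2 = A *ᵥ Pi.single x 1 ⬝ᵥ A *ᵥ Pi.single x 1 := by
  simp [dotProduct, sq, ← hA.apply x]

end Matrix

/-- The factor `1 - p` makes this hold for `n = 0` as well. -/
theorem pow_sub_eq_sub_pow_mul {R : Type*} [Ring R] {m p : R} (hmp : m * p = p)
    (hpm : p * m = p) (hp : IsIdempotentElem p) (n : ℕ) :
    m ^ n - p = (m - p) ^ n * (1 - p) := by
  have hpmn : ∀ k : ℕ, p * m ^ k = p := fun k => by
    induction k with
    | zero => simp
    | succ k ih => rw [pow_succ, ← mul_assoc, ih, hpm]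
  induction n with
  | zero => simp
  | succ n ih =>
    rw [pow_succ' m, pow_succ' (m - p), mul_assoc, ← ih, sub_mul, mul_sub, mul_sub, hmp, hpmn,
      hp.eq]
    abel

open Matrix

section Reversible

variable {S : Type*} {f : S → ℝ}

noncomputable def stationaryProjection (f : S → ℝ) : Matrix S S ℝ :=
  vecMulVec (fun x => √(f x)) (fun x => √(f x))

theorem isHermitian_stationaryProjection : (stationaryProjection f).IsHermitian := by
  simp [IsHermitian, stationaryProjection]

variable [Fintype S]

theorem sqrt_dotProduct_sqrt (hf : ∀ x, 0 ≤ f x) (hf1 : ∑ x, f x = 1) :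
    (fun x => √(f x)) ⬝ᵥ (fun x => √(f x)) = 1 := by
  simp [dotProduct, Real.mul_self_sqrt (hf _), hf1]

theorem sqrt_vecMul_stationaryProjection (hf : ∀ x, 0 ≤ f x) (hf1 : ∑ x, f x = 1) :
    (fun x => √(f x)) ᵥ* stationaryProjection f = fun x => √(f x) := by
  rw [stationaryProjection, vecMul_vecMulVec, sqrt_dotProduct_sqrt hf hf1, one_smul]

theorem isIdempotentElem_stationaryProjection (hf : ∀ x, 0 ≤ f x) (hf1 : ∑ x, f x = 1) :
    IsIdempotentElem (stationaryProjection f) := by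
  rw [IsIdempotentElem, stationaryProjection, vecMulVec_mul_vecMulVec, sqrt_dotProduct_sqrt hf hf1,
    one_smul]

variable [DecidableEq S]

noncomputable def symmetrize (K : Matrix S S ℝ) (f : S → ℝ) : Matrix S S ℝ :=
  diagonal (fun x => √(f x)) * K * diagonal (fun x => (√(f x))⁻¹)

variable {K : Matrix S S ℝ}

theorem symmetrize_apply (x y : S) :
    symmetrize K f x y = √(f x) * K x y * (√(f y))⁻¹ := by
  simp [symmetrize, diagonal_mul, mul_diagonal]

theorem diagonal_inv_sqrt_mul_diagonal_sqrt (hf : ∀ x, 0 < f x) :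
    diagonal (fun x => (√(f x))⁻¹) * diagonal (fun x => √(f x)) = 1 := by
  rw [diagonal_mul_diagonal, ← diagonal_one]
  exact congrArg diagonal (funext fun x => inv_mul_cancel₀ (Real.sqrt_pos.mpr (hf x)).ne')

theorem symmetrize_pow_mul_diagonal (hf : ∀ x, 0 < f x) (n : ℕ) :
    symmetrize K f ^ n * diagonal (fun x => √(f x)) = diagonal (fun x => √(f x)) * K ^ n := by
  have : SemiconjBy (diagonal fun x => √(f x)) K (symmetrize K f) := by
    rw [SemiconjBy, symmetrize, mul_assoc _ _ (diagonal _),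
      diagonal_inv_sqrt_mul_diagonal_sqrt hf, mul_one]
  exact (this.pow_right n).eq.symm

theorem diagonal_inv_sqrt_mul_symmetrize (hf : ∀ x, 0 < f x) :
    diagonal (fun x => (√(f x))⁻¹) * symmetrize K f = K * diagonal (fun x => (√(f x))⁻¹) := by
  rw [symmetrize, ← mul_assoc, ← mul_assoc, diagonal_inv_sqrt_mul_diagonal_sqrt hf, one_mul]

theorem isHermitian_symmetrize (hf : ∀ x, 0 < f x) (hdb : ∀ x y, K x y * f x = K y x * f y) :
    (symmetrize K f).IsHermitian := by
  ext x y
  have hx := Real.sqrt_pos.mpr (hf x)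
  have hy := Real.sqrt_pos.mpr (hf y)
  rw [conjTranspose_apply, star_trivial, symmetrize_apply, symmetrize_apply]
  field_simp
  have := hdb x y
  rw [← Real.mul_self_sqrt (hf x).le, ← Real.mul_self_sqrt (hf y).le] at this
  linear_combination -this

theorem symmetrize_mulVec_sqrt (hf : ∀ x, 0 < f x) (hK1 : ∀ x, ∑ y, K x y = 1) :
    symmetrize K f *ᵥ (fun x => √(f x)) = fun x => √(f x) := by
  ext x
  simp only [mulVec, dotProduct, symmetrize_apply, mul_assoc,
    inv_mul_cancel₀ (Real.sqrt_pos.mpr (hf _)).ne', mul_one, ← Finset.mul_sum, hK1]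

theorem stationaryProjection_mul_symmetrize (hf : ∀ x, 0 < f x) (hK1 : ∀ x, ∑ y, K x y = 1)
    (hdb : ∀ x y, K x y * f x = K y x * f y) :
    stationaryProjection f * symmetrize K f = stationaryProjection f := by
  rw [stationaryProjection, vecMulVec_mul, ← (isHermitian_symmetrize hf hdb).eq,
    conjTranspose_eq_transpose_of_trivial, vecMul_transpose, symmetrize_mulVec_sqrt hf hK1]

theorem symmetrize_mul_stationaryProjection (hf : ∀ x, 0 < f x) (hK1 : ∀ x, ∑ y, K x y = 1) :
    symmetrize K f * stationaryProjection f = stationaryProjection f := by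
  rw [stationaryProjection, mul_vecMulVec, symmetrize_mulVec_sqrt hf hK1]

theorem symmetrize_pow_sub_stationaryProjection_mul_sqrt (hf : ∀ x, 0 < f x) (n : ℕ) (x y : S) :
    (symmetrize K f ^ n - stationaryProjection f) x y * √(f y) = √(f x) * ((K ^ n) x y - f y) := by
  have h := congrFun₂ (symmetrize_pow_mul_diagonal (K := K) hf n) x y
  simp only [mul_diagonal, diagonal_mul] at h
  rw [Matrix.sub_apply, sub_mul, h, stationaryProjection, vecMulVec_apply, mul_assoc,
    Real.mul_self_sqrt (hf y).le, mul_sub]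

theorem symmetrize_mulVec_eq_smul_of_sub_stationaryProjection (hf : ∀ x, 0 < f x)
    (hf1 : ∑ x, f x = 1) (hK1 : ∀ x, ∑ y, K x y = 1) (hdb : ∀ x y, K x y * f x = K y x * f y)
    {μ : ℝ} (hμ : μ ≠ 0) {g : S → ℝ}
    (hμg : (symmetrize K f - stationaryProjection f) *ᵥ g = μ • g) :
    symmetrize K f *ᵥ g = μ • g ∧ (fun x => √(f x)) ⬝ᵥ g = 0 := by
  have hPg : stationaryProjection f *ᵥ g = 0 := by
    have hPB : stationaryProjection f * (symmetrize K f - stationaryProjection f) = 0 := by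
      rw [mul_sub, stationaryProjection_mul_symmetrize hf hK1 hdb,
        (isIdempotentElem_stationaryProjection (fun x => (hf x).le) hf1).eq, sub_self]
    have : μ • (stationaryProjection f *ᵥ g) = 0 := by
      rw [← mulVec_smul, ← hμg, mulVec_mulVec, hPB, zero_mulVec]
    exact (smul_eq_zero.mp this).resolve_left hμ
  constructor
  · rwa [sub_mulVec, hPg, sub_zero] at hμg
  · rw [← sqrt_vecMul_stationaryProjection (fun x => (hf x).le) hf1, ← dotProduct_mulVec, hPg,
      dotProduct_zero]

theorem mulVec_diagonal_inv_sqrt_eq_smul (hf : ∀ x, 0 < f x) {μ : ℝ} {g : S → ℝ}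
    (hμg : symmetrize K f *ᵥ g = μ • g) :
    K *ᵥ (diagonal (fun x => (√(f x))⁻¹) *ᵥ g) = μ • (diagonal (fun x => (√(f x))⁻¹) *ᵥ g) := by
  rw [mulVec_mulVec, ← diagonal_inv_sqrt_mul_symmetrize hf, ← mulVec_mulVec, hμg, mulVec_smul]

theorem abs_le_of_symmetrize_sub_stationaryProjection_mulVec_eq_smul
    (hf : ∀ x, 0 < f x) (hf1 : ∑ x, f x = 1) (hK1 : ∀ x, ∑ y, K x y = 1)
    (hdb : ∀ x y, K x y * f x = K y x * f y) {β : ℝ} (hβ0 : 0 ≤ β)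
    (hβ : ∀ (μ : ℝ) (g : S → ℝ), g ≠ 0 →
        (∀ x, ∑ y, K x y * g y = μ * g x) → μ = 1 ∨ |μ| ≤ β)
    (hsimple : ∀ g : S → ℝ, (∀ x, ∑ y, K x y * g y = g x) → ∀ x y, g x = g y)
    {μ : ℝ} {g : S → ℝ} (hg : g ≠ 0)
    (hμg : (symmetrize K f - stationaryProjection f) *ᵥ g = μ • g) : |μ| ≤ β := by
  rcases eq_or_ne μ 0 with rfl | hμ
  · simpa using hβ0
  obtain ⟨hMg, hφg⟩ := symmetrize_mulVec_eq_smul_of_sub_stationaryProjection hf hf1 hK1 hdb hμ hμg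
  set h := diagonal (fun x => (√(f x))⁻¹) *ᵥ g
  have hKh : K *ᵥ h = μ • h := mulVec_diagonal_inv_sqrt_eq_smul hf hMg
  have hg_eq : ∀ x, g x = √(f x) * h x := fun x => by
    simp [h, mulVec_diagonal, ← mul_assoc, mul_inv_cancel₀ (Real.sqrt_pos.mpr (hf x)).ne']
  have hh : h ≠ 0 := fun h0 => hg (funext fun x => by simp [hg_eq x, h0])
  refine (hβ μ h hh fun x => congrFun hKh x).resolve_left ?_
  rintro rfl
  obtain ⟨x₀, hx₀⟩ : ∃ x, h x ≠ 0 := Function.ne_iff.mp hh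
  have hconst := hsimple h fun x => (congrFun hKh x).trans (one_mul (h x))
  refine hx₀ ?_
  calc h x₀ = (fun x => √(f x)) ⬝ᵥ g := by
        simp only [dotProduct, hg_eq, ← mul_assoc, Real.mul_self_sqrt (hf _).le, hconst _ x₀,
          ← Finset.sum_mul, hf1, one_mul]
    _ = 0 := hφg

theorem sum_sq_symmetrize_pow_sub_stationaryProjection_le
    (hf : ∀ x, 0 < f x) (hf1 : ∑ x, f x = 1) (hK1 : ∀ x, ∑ y, K x y = 1)
    (hdb : ∀ x y, K x y * f x = K y x * f y) {β : ℝ} (hβ0 : 0 ≤ β)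
    (hβ : ∀ (μ : ℝ) (g : S → ℝ), g ≠ 0 →
        (∀ x, ∑ y, K x y * g y = μ * g x) → μ = 1 ∨ |μ| ≤ β)
    (hsimple : ∀ g : S → ℝ, (∀ x, ∑ y, K x y * g y = g x) → ∀ x y, g x = g y) (n : ℕ) (x : S) :
    ∑ y, (symmetrize K f ^ n - stationaryProjection f) x y ^ 2 ≤ (β ^ n) ^ 2 := by
  have hM := isHermitian_symmetrize hf hdb
  have hP := isIdempotentElem_stationaryProjection (fun x => (hf x).le) hf1
  have hPh : (stationaryProjection f).IsHermitian := isHermitian_stationaryProjection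
  set e : S → ℝ := Pi.single x 1
  rw [((hM.pow n).sub hPh).sum_sq_apply, pow_sub_eq_sub_pow_mul
    (symmetrize_mul_stationaryProjection hf hK1) (stationaryProjection_mul_symmetrize hf hK1 hdb)
    hP n, ← mulVec_mulVec]
  set Q := 1 - stationaryProjection f
  calc _ ≤ (β ^ n) ^ 2 * (Q *ᵥ e ⬝ᵥ Q *ᵥ e) :=
        (hM.sub hPh).pow_mulVec_dotProduct_self_le (fun _ _ hg hμg =>
          abs_le_of_symmetrize_sub_stationaryProjection_mulVec_eq_smul hf hf1 hK1 hdb hβ0 hβ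
            hsimple hg hμg) n _
    _ ≤ (β ^ n) ^ 2 * (1 ^ 2 * (e ⬝ᵥ e)) := by
        gcongr
        exact (isHermitian_one.sub hPh).mulVec_dotProduct_self_le
          (fun _ _ hg hμg => abs_le_one_of_isIdempotentElem hP.one_sub hg hμg) e
    _ = (β ^ n) ^ 2 := by simp [e]

theorem sum_abs_pow_sub_le (hf : ∀ x, 0 < f x) (hf1 : ∑ x, f x = 1) (n : ℕ) (x : S) :
    ∑ y, |(K ^ n) x y - f y| ≤
      (√(f x))⁻¹ * √(∑ y, (symmetrize K f ^ n - stationaryProjection f) x y ^ 2) := by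
  let N := symmetrize K f ^ n - stationaryProjection f
  have hx := Real.sqrt_pos.mpr (hf x)
  have hterm : ∀ y, |(K ^ n) x y - f y| = (√(f x))⁻¹ * (√(f y) * |N x y|) := fun y => by
    rw [eq_inv_mul_iff_mul_eq₀ hx.ne', ← abs_of_pos hx, ← abs_mul,
      ← symmetrize_pow_sub_stationaryProjection_mul_sqrt hf, abs_mul,
      abs_of_pos (Real.sqrt_pos.mpr (hf y)), mul_comm]
  calc ∑ y, |(K ^ n) x y - f y| = (√(f x))⁻¹ * ∑ y, √(f y) * |N x y| := by
        rw [Finset.mul_sum]; exact Finset.sum_congr rfl fun y _ => hterm y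
    _ ≤ (√(f x))⁻¹ * (√(∑ y, √(f y) ^ 2) * √(∑ y, |N x y| ^ 2)) := by
        gcongr; exact Real.sum_mul_le_sqrt_mul_sqrt _ _ _
    _ = (√(f x))⁻¹ * √(∑ y, N x y ^ 2) := by
        simp only [Real.sq_sqrt (hf _).le, hf1, Real.sqrt_one, one_mul, sq_abs]

end Reversible

theorem tv_convergence_bound_general
    {S : Type*} [Fintype S] [DecidableEq S]
    (K : Matrix S S ℝ) (f : S → ℝ)
    (hK1 : ∀ x, ∑ y, K x y = 1)
    (hf : ∀ x, 0 < f x) (hf1 : ∑ x, f x = 1)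
    (hdb : ∀ x y, K x y * f x = K y x * f y)
    (β : ℝ) (hβ0 : 0 ≤ β)
    -- every eigenvalue of K (as an operator) other than the simple eigenvalue 1
    -- has modulus at most β
    (hβ : ∀ (μ : ℝ) (g : S → ℝ), g ≠ 0 →
        (∀ x, ∑ y, K x y * g y = μ * g x) → μ = 1 ∨ |μ| ≤ β)
    -- 1 is a simple eigenvalue: its eigenfunctions are constant
    (hsimple : ∀ g : S → ℝ, (∀ x, ∑ y, K x y * g y = g x) → ∀ x y, g x = g y) :
    ∀ (n : ℕ) (x : S),
      2 * ((1 / 2) * ∑ y, |(K ^ n) x y - f y|) ≤ (Real.sqrt (f x))⁻¹ * β ^ n := by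
  intro n x
  have hrow := sum_sq_symmetrize_pow_sub_stationaryProjection_le hf hf1 hK1 hdb hβ0 hβ hsimple n x
  calc 2 * ((1 / 2) * ∑ y, |(K ^ n) x y - f y|) = ∑ y, |(K ^ n) x y - f y| := by ring
    _ ≤ (√(f x))⁻¹ * √(∑ y, (symmetrize K f ^ n - stationaryProjection f) x y ^ 2) :=
        sum_abs_pow_sub_le hf hf1 n x
    _ ≤ (√(f x))⁻¹ * β ^ n := by
        gcongr
        exact Real.sqrt_le_iff.mpr ⟨pow_nonneg hβ0 n, hrow⟩

theorem tv_convergence_bound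
    {S : Type*} [Fintype S] [DecidableEq S]
    (K : Matrix S S ℝ) (f : S → ℝ)
    (hK0 : ∀ x y, 0 ≤ K x y) (hK1 : ∀ x, ∑ y, K x y = 1)
    (hf : ∀ x, 0 < f x) (hf1 : ∑ x, f x = 1)
    (hdb : ∀ x y, K x y * f x = K y x * f y)
    (β : ℝ) (hβ0 : 0 ≤ β) (hβ1 : β < 1)
    -- every eigenvalue of K (as an operator) other than the simple eigenvalue 1
    -- has modulus at most β
    (hβ : ∀ (μ : ℝ) (g : S → ℝ), g ≠ 0 →
        (∀ x, ∑ y, K x y * g y = μ * g x) → μ = 1 ∨ |μ| ≤ β)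
    -- 1 is a simple eigenvalue: its eigenfunctions are constant
    (hsimple : ∀ g : S → ℝ, (∀ x, ∑ y, K x y * g y = g x) → ∀ x y, g x = g y) :
    ∀ (n : ℕ) (x : S),
      2 * ((1 / 2) * ∑ y, |(K ^ n) x y - f y|) ≤ (Real.sqrt (f x))⁻¹ * β ^ n :=
  tv_convergence_bound_general K f hK1 hf hf1 hdb β hβ0 hβ hsimple
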